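/- Let μ be a compactly supported probability measure on ℝ with Stieltjes transform m_μ. Then there exists a unique holomorphic function s₀ from the upper half-plane to the upper half-plane satisfying s₀(z) = m_μ(z + s₀(z)) for all z with Im(z) > 0. -/

import Mathlib

open MeasureTheory

/-- The Stieltjes transform of a measure on ℝ. -/
noncomputable def stieltjes (μ : Measure ℝ) (z : ℂ) : ℂ := ∫ x, ((x : ℂ) - z)⁻¹ ∂μ

/-!
Write `J(w) = ∫ |x - w|⁻² dμ(x)`. Then `Im m(w) = Im w · J(w)` and
`|m(w₁) - m(w₂)| ≤ |w₁ - w₂| (J(w₁) + J(w₂)) / 2`. At a solution of `s = m(z + s)` we get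
`Im s = (Im z + Im s) J(z + s)`, so `J(z + s) < 1`: near `s` the map `s ↦ m(z + s)` is a
contraction, uniformly for `z` near the given point. This gives uniqueness, and, since the
iterates are holomorphic in `z` and converge uniformly, a holomorphic solution near every point
where a solution exists. So the set of such points is open; it is nonempty (for `Im z > 3`,
`m(z + ·)` contracts the closed unit disc), and it is relatively closed in the upper half-plane
because `|s| ≤ 1 / Im z` and `Im s ≥ Im z · J(z + s)`, with `J` bounded below on bounded sets,
keep the solutions in a compact subset of the half-plane while `z` stays in one. By
connectedness there is a solution everywhere, and it is holomorphic since it agrees locally with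
the local holomorphic solutions.
-/

open Metric Filter Complex Set Topology NNReal

theorem LipschitzOnWith.dist_iterate_succ_le_geometric {α : Type*} [PseudoMetricSpace α]
    {f : α → α} {s : Set α} {K : ℝ≥0} (hf : LipschitzOnWith K f s) (hfs : MapsTo f s s)
    {x : α} (hx : x ∈ s) (n : ℕ) :
    dist (f^[n] x) (f^[n + 1] x) ≤ dist x (f x) * K ^ n := by
  induction n with
  | zero => simp
  | succ n ih =>
    rw [Function.iterate_succ_apply', Function.iterate_succ_apply' f (n + 1), pow_succ']
    calc dist (f (f^[n] x)) (f (f^[n + 1] x)) ≤ K * dist (f^[n] x) (f^[n + 1] x) :=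
          hf.dist_le_mul _ (hfs.iterate n hx) _ (hfs.iterate (n + 1) hx)
      _ ≤ K * (dist x (f x) * K ^ n) := by gcongr
      _ = dist x (f x) * (K * K ^ n) := by ring

theorem exists_differentiableOn_fixedPoint {E : Type*} [NormedAddCommGroup E] [NormedSpace ℂ E]
    [CompleteSpace E] {U : Set ℂ} (hU : IsOpen U) {K : Set E} (hK : IsClosed K)
    {F : ℂ → E → E} {k : ℝ≥0} (hk : k < 1) (hFK : ∀ z ∈ U, MapsTo (F z) K K)
    (hF : ∀ z ∈ U, LipschitzOnWith k (F z) K) {x₀ : E} (hx₀ : x₀ ∈ K) {C : ℝ}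
    (hC : ∀ z ∈ U, dist x₀ (F z x₀) ≤ C)
    (hFg : ∀ g : ℂ → E, DifferentiableOn ℂ g U → MapsTo g U K →
      DifferentiableOn ℂ (fun z ↦ F z (g z)) U) :
    ∃ g : ℂ → E, DifferentiableOn ℂ g U ∧ ∀ z ∈ U, g z ∈ K ∧ F z (g z) = g z := by
  set G : ℕ → ℂ → E := fun n z ↦ (F z)^[n] x₀
  have hGK (n : ℕ) : MapsTo (G n) U K := fun z hz ↦ (hFK z hz).iterate n hx₀
  have hG (n : ℕ) : DifferentiableOn ℂ (G n) U := by
    induction n with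
    | zero => exact differentiableOn_const x₀
    | succ n ih =>
      simp only [G, Function.iterate_succ_apply']
      exact hFg _ ih (hGK n)
  have hk' : (k : ℝ) < 1 := hk
  have hgeom : ∀ z ∈ U, ∀ n, dist (G n z) (G (n + 1) z) ≤ C * k ^ n := fun z hz n ↦
    ((hF z hz).dist_iterate_succ_le_geometric (hFK z hz) hx₀ n).trans
      (mul_le_mul_of_nonneg_right (hC z hz) (pow_nonneg k.2 n))
  choose! g hg using fun z (hz : z ∈ U) ↦
    cauchySeq_tendsto_of_complete (cauchySeq_of_le_geometric _ _ hk' (hgeom z hz))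
  have hunif : TendstoUniformlyOn G g atTop U := by
    rw [Metric.tendstoUniformlyOn_iff]
    intro ε hε
    have hlim : Tendsto (fun n : ℕ ↦ C * k ^ n / (1 - k)) atTop (𝓝 0) := by
      simpa using ((_root_.tendsto_pow_atTop_nhds_zero_of_lt_one k.2 hk').const_mul C).div_const
        (1 - (k : ℝ))
    filter_upwards [hlim.eventually (gt_mem_nhds hε)] with n hn z hz
    rw [dist_comm]
    exact (dist_le_of_le_geometric_of_tendsto _ _ hk' (hgeom z hz) (hg z hz) n).trans_lt hn
  refine ⟨g, hunif.tendstoLocallyUniformlyOn.differentiableOn (.of_forall hG) hU,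
    fun z hz ↦ ?_⟩
  have hgK : g z ∈ K := hK.mem_of_tendsto (hg z hz) (.of_forall fun n ↦ hGK n hz)
  refine ⟨hgK, tendsto_nhds_unique ?_ ((hg z hz).comp (tendsto_add_atTop_nat 1))⟩
  have hGK' : Tendsto (fun n ↦ G n z) atTop (𝓝[K] g z) :=
    tendsto_nhdsWithin_iff.2 ⟨hg z hz, .of_forall fun n ↦ hGK n hz⟩
  simpa only [Function.comp_def, G, Function.iterate_succ_apply'] using
    ((hF z hz).continuousOn (g z) hgK).tendsto.comp hGK'

theorem Complex.im_sub_lt_im_of_dist_lt {w w' : ℂ} {r : ℝ} (h : dist w' w < r) :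
    w.im - r < w'.im := by
  have := (abs_le.1 (abs_im_le_norm (w' - w))).1
  rw [sub_im, ← dist_eq_norm] at this
  linarith

noncomputable def invDistSqIntegral (μ : Measure ℝ) (w : ℂ) : ℝ :=
  ∫ x, ‖((x : ℂ) - w)⁻¹‖ ^ 2 ∂μ

section Stieltjes

variable {μ : Measure ℝ} {x : ℝ} {w w₁ w₂ : ℂ}

theorem ofReal_sub_ne_zero_of_im_pos (hw : 0 < w.im) : (x : ℂ) - w ≠ 0 := by
  intro h
  simpa [hw.ne'] using congrArg im h

theorem norm_inv_ofReal_sub_le (hw : 0 < w.im) : ‖((x : ℂ) - w)⁻¹‖ ≤ w.im⁻¹ := by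
  rw [norm_inv]
  refine inv_anti₀ hw ?_
  simpa using neg_le_abs (x - w : ℂ).im |>.trans (abs_im_le_norm _)

theorem im_inv_ofReal_sub : (((x : ℂ) - w)⁻¹).im = w.im * ‖((x : ℂ) - w)⁻¹‖ ^ 2 := by
  rw [inv_im, norm_inv, inv_pow, ← normSq_eq_norm_sq, div_eq_mul_inv]
  simp

theorem invDistSqIntegral_nonneg : 0 ≤ invDistSqIntegral μ w :=
  integral_nonneg fun _ ↦ sq_nonneg _

variable [IsFiniteMeasure μ]

theorem integrable_inv_ofReal_sub (hw : 0 < w.im) :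
    Integrable (fun x : ℝ ↦ ((x : ℂ) - w)⁻¹) μ :=
  (integrable_const w.im⁻¹).mono'
    ((continuous_ofReal.sub continuous_const).inv₀
      fun _ ↦ ofReal_sub_ne_zero_of_im_pos hw).aestronglyMeasurable
    (.of_forall fun _ ↦ norm_inv_ofReal_sub_le hw)

theorem integrable_norm_inv_ofReal_sub_sq (hw : 0 < w.im) :
    Integrable (fun x : ℝ ↦ ‖((x : ℂ) - w)⁻¹‖ ^ 2) μ :=
  (integrable_const (w.im⁻¹ ^ 2)).mono'
    ((integrable_inv_ofReal_sub hw).aestronglyMeasurable.norm.pow 2)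
    (.of_forall fun _ ↦ by
      rw [norm_pow, norm_norm]
      exact pow_le_pow_left₀ (norm_nonneg _) (norm_inv_ofReal_sub_le hw) 2)

theorem im_stieltjes (hw : 0 < w.im) : (stieltjes μ w).im = w.im * invDistSqIntegral μ w := by
  rw [invDistSqIntegral, ← integral_const_mul]
  exact (integral_im (integrable_inv_ofReal_sub hw)).symm.trans
    (integral_congr_ae (.of_forall fun _ ↦ im_inv_ofReal_sub))

theorem norm_stieltjes_sub_le (hw₁ : 0 < w₁.im) (hw₂ : 0 < w₂.im) :
    ‖stieltjes μ w₁ - stieltjes μ w₂‖ ≤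
      ‖w₁ - w₂‖ * ((invDistSqIntegral μ w₁ + invDistSqIntegral μ w₂) / 2) := by
  rw [stieltjes, stieltjes, ← integral_sub (integrable_inv_ofReal_sub hw₁)
    (integrable_inv_ofReal_sub hw₂), invDistSqIntegral, invDistSqIntegral,
    ← integral_add (integrable_norm_inv_ofReal_sub_sq hw₁) (integrable_norm_inv_ofReal_sub_sq hw₂),
    ← integral_div, ← integral_const_mul]
  -- with `u = x - w₁`, `v = x - w₂`: `u⁻¹ - v⁻¹ = (w₁ - w₂) u⁻¹ v⁻¹`, and
  -- `‖u⁻¹‖ ‖v⁻¹‖ ≤ (‖u⁻¹‖² + ‖v⁻¹‖²) / 2` by AM-GM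
  refine norm_integral_le_of_norm_le
    ((((integrable_norm_inv_ofReal_sub_sq hw₁).add
      (integrable_norm_inv_ofReal_sub_sq hw₂)).div_const 2).const_mul _) (.of_forall fun x ↦ ?_)
  have hid : ((x : ℂ) - w₁)⁻¹ - ((x : ℂ) - w₂)⁻¹ =
      (w₁ - w₂) * (((x : ℂ) - w₁)⁻¹ * ((x : ℂ) - w₂)⁻¹) := by
    field_simp [ofReal_sub_ne_zero_of_im_pos hw₁, ofReal_sub_ne_zero_of_im_pos hw₂]
    ring
  rw [hid, norm_mul, norm_mul]
  gcongr
  nlinarith [sq_nonneg (‖((x : ℂ) - w₁)⁻¹‖ - ‖((x : ℂ) - w₂)⁻¹‖)]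

theorem lipschitzOnWith_stieltjes {S : Set ℂ} {k : ℝ≥0}
    (hS : ∀ w ∈ S, 0 < w.im ∧ invDistSqIntegral μ w ≤ k) :
    LipschitzOnWith k (stieltjes μ) S :=
  LipschitzOnWith.of_dist_le_mul fun w₁ hw₁ w₂ hw₂ ↦ by
    rw [dist_eq_norm, dist_eq_norm, mul_comm]
    refine (norm_stieltjes_sub_le (hS w₁ hw₁).1 (hS w₂ hw₂).1).trans ?_
    gcongr
    linarith [(hS w₁ hw₁).2, (hS w₂ hw₂).2]

theorem hasDerivAt_stieltjes (hw : 0 < w.im) :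
    HasDerivAt (stieltjes μ) (∫ x, ((x : ℂ) - w)⁻¹ ^ 2 ∂μ) w := by
  have hη : 0 < w.im / 2 := half_pos hw
  have him : ∀ w' ∈ ball w (w.im / 2), w.im / 2 < w'.im := fun w' hw' ↦ by
    linarith [im_sub_lt_im_of_dist_lt (mem_ball.1 hw')]
  refine (hasDerivAt_integral_of_dominated_loc_of_deriv_le
    (F := fun w' (x : ℝ) ↦ ((x : ℂ) - w')⁻¹) (F' := fun w' (x : ℝ) ↦ ((x : ℂ) - w')⁻¹ ^ 2)
    (bound := fun _ ↦ (w.im / 2)⁻¹ ^ 2)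
    (ball_mem_nhds w hη) (.of_forall fun w' ↦ ?_) (integrable_inv_ofReal_sub hw)
    ((measurable_ofReal.sub_const w).inv.pow_const 2).aestronglyMeasurable
    (.of_forall fun x w' hw' ↦ ?_) (integrable_const _) (.of_forall fun x w' hw' ↦ ?_)).2
  · exact (measurable_ofReal.sub_const w').inv.aestronglyMeasurable
  · rw [norm_pow]
    gcongr
    exact (norm_inv_ofReal_sub_le (hη.trans (him w' hw'))).trans (inv_anti₀ hη (him w' hw').le)
  · have hne := ofReal_sub_ne_zero_of_im_pos (x := x) (hη.trans (him w' hw'))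
    have h := ((hasDerivAt_id w').const_sub (x : ℂ)).inv hne
    simp only [id, neg_neg, one_div, ← inv_pow] at h
    exact h

theorem differentiableAt_stieltjes (hw : 0 < w.im) : DifferentiableAt ℂ (stieltjes μ) w :=
  (hasDerivAt_stieltjes hw).differentiableAt

-- `invDistSqIntegral μ = im ∘ stieltjes μ / im` on the upper half-plane
theorem continuousAt_invDistSqIntegral (hw : 0 < w.im) :
    ContinuousAt (invDistSqIntegral μ) w := by
  have hcont : ContinuousAt (fun w' ↦ (stieltjes μ w').im / w'.im) w :=
    (continuous_im.continuousAt.comp (differentiableAt_stieltjes hw).continuousAt).div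
      continuous_im.continuousAt hw.ne'
  refine hcont.congr (Filter.mem_of_superset
    (UpperHalfPlane.isOpen_upperHalfPlaneSet.mem_nhds hw) fun w' (hw' : 0 < w'.im) ↦ ?_)
  show (stieltjes μ w').im / w'.im = invDistSqIntegral μ w'
  rw [im_stieltjes hw', mul_div_cancel_left₀ _ hw'.ne']

theorem integral_inv_add_sq_le_invDistSqIntegral {B : ℝ} (hw : 0 < w.im) (hB : ‖w‖ ≤ B) :
    ∫ x, ((|x| + B) ^ 2)⁻¹ ∂μ ≤ invDistSqIntegral μ w := by
  have hB₀ : 0 < B := (hw.trans_le (im_le_norm w)).trans_le hB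
  refine integral_mono ((integrable_const (B⁻¹ ^ 2)).mono'
    (by fun_prop) (.of_forall fun x ↦ ?_)) (integrable_norm_inv_ofReal_sub_sq hw) fun x ↦ ?_
  · rw [norm_inv, norm_pow, Real.norm_of_nonneg (by positivity), inv_pow]
    gcongr
    linarith [abs_nonneg x]
  · rw [norm_inv, inv_pow]
    gcongr
    · exact pow_pos (norm_pos_iff.2 (ofReal_sub_ne_zero_of_im_pos hw)) 2
    · calc ‖(x : ℂ) - w‖ ≤ ‖(x : ℂ)‖ + ‖w‖ := norm_sub_le _ _
        _ ≤ |x| + B := by rw [norm_real, Real.norm_eq_abs]; linarith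

theorem integral_inv_add_sq_pos [NeZero μ] {B : ℝ} (hB : 0 < B) :
    0 < ∫ x, ((|x| + B) ^ 2)⁻¹ ∂μ := by
  have hpos : ∀ x : ℝ, 0 < ((|x| + B) ^ 2)⁻¹ := fun x ↦ by positivity
  refine (integral_pos_iff_support_of_nonneg (fun x ↦ (hpos x).le)
    ((integrable_const (B⁻¹ ^ 2)).mono' (by fun_prop) (.of_forall fun x ↦ ?_))).2 ?_
  · rw [norm_inv, norm_pow, Real.norm_of_nonneg (by positivity), inv_pow]
    gcongr
    linarith [abs_nonneg x]
  · rw [Function.support_eq_univ fun x ↦ (hpos x).ne', Measure.measure_univ_pos]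
    exact NeZero.ne μ

theorem invDistSqIntegral_pos [NeZero μ] (hw : 0 < w.im) : 0 < invDistSqIntegral μ w :=
  (integral_inv_add_sq_pos (hw.trans_le (im_le_norm w))).trans_le
    (integral_inv_add_sq_le_invDistSqIntegral hw le_rfl)

variable [IsProbabilityMeasure μ]

theorem norm_stieltjes_le (hw : 0 < w.im) : ‖stieltjes μ w‖ ≤ w.im⁻¹ := by
  simpa [stieltjes] using norm_integral_le_of_norm_le_const (μ := μ)
    (.of_forall fun x ↦ norm_inv_ofReal_sub_le (x := x) hw)

theorem invDistSqIntegral_le (hw : 0 < w.im) : invDistSqIntegral μ w ≤ w.im⁻¹ ^ 2 := by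
  simpa [invDistSqIntegral] using integral_mono (integrable_norm_inv_ofReal_sub_sq hw)
    (integrable_const (μ := μ) (w.im⁻¹ ^ 2))
    fun x ↦ pow_le_pow_left₀ (norm_nonneg _) (norm_inv_ofReal_sub_le (x := x) hw) 2

end Stieltjes

def IsSelfConsistent (μ : Measure ℝ) (z s : ℂ) : Prop :=
  0 < s.im ∧ s = stieltjes μ (z + s)

namespace IsSelfConsistent

variable {μ : Measure ℝ} {z s t : ℂ}

theorem im_add_pos (hz : 0 < z.im) (hs : IsSelfConsistent μ z s) : 0 < (z + s).im := by
  rw [add_im]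
  exact add_pos hz hs.1

theorem im_eq [IsFiniteMeasure μ] (hz : 0 < z.im) (hs : IsSelfConsistent μ z s) :
    s.im = (z + s).im * invDistSqIntegral μ (z + s) := by
  conv_lhs => rw [hs.2]
  exact im_stieltjes (hs.im_add_pos hz)

theorem invDistSqIntegral_lt_one [IsFiniteMeasure μ] (hz : 0 < z.im)
    (hs : IsSelfConsistent μ z s) : invDistSqIntegral μ (z + s) < 1 := by
  have h := hs.im_eq hz
  rw [add_im] at h
  nlinarith [hs.1, invDistSqIntegral_nonneg (μ := μ) (w := z + s)]

theorem eq [IsFiniteMeasure μ] (hz : 0 < z.im) (hs : IsSelfConsistent μ z s)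
    (ht : IsSelfConsistent μ z t) : s = t := by
  have hJ := add_lt_add (hs.invDistSqIntegral_lt_one hz) (ht.invDistSqIntegral_lt_one hz)
  have hst : ‖s - t‖ ≤ ‖s - t‖ *
      ((invDistSqIntegral μ (z + s) + invDistSqIntegral μ (z + t)) / 2) := by
    calc ‖s - t‖ = ‖stieltjes μ (z + s) - stieltjes μ (z + t)‖ := by rw [← hs.2, ← ht.2]
      _ ≤ _ := norm_stieltjes_sub_le (hs.im_add_pos hz) (ht.im_add_pos hz)
      _ = _ := by rw [add_sub_add_left_eq_sub]
  have : ‖s - t‖ = 0 := by nlinarith [norm_nonneg (s - t)]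
  exact sub_eq_zero.1 (norm_eq_zero.1 this)

theorem norm_le [IsProbabilityMeasure μ] (hz : 0 < z.im) (hs : IsSelfConsistent μ z s) :
    ‖s‖ ≤ z.im⁻¹ := by
  rw [hs.2]
  refine (norm_stieltjes_le (hs.im_add_pos hz)).trans (inv_anti₀ hz ?_)
  rw [add_im]
  linarith [hs.1]

theorem mul_integral_le_im [IsFiniteMeasure μ] {B : ℝ} (hz : 0 < z.im)
    (hs : IsSelfConsistent μ z s) (hB : ‖z + s‖ ≤ B) :
    z.im * ∫ x, ((|x| + B) ^ 2)⁻¹ ∂μ ≤ s.im := by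
  rw [hs.im_eq hz]
  gcongr
  · exact (hs.im_add_pos hz).le
  · rw [add_im]; linarith [hs.1]
  · exact integral_inv_add_sq_le_invDistSqIntegral (hs.im_add_pos hz) hB

end IsSelfConsistent

section Existence

variable {μ : Measure ℝ}

theorem exists_differentiableOn_isSelfConsistent [IsFiniteMeasure μ] [NeZero μ]
    {U K S : Set ℂ} (hU : IsOpen U) (hK : IsCompact K) (hK₀ : K.Nonempty) {k : ℝ≥0} (hk : k < 1)
    (hS : ∀ w ∈ S, 0 < w.im ∧ invDistSqIntegral μ w ≤ k) (hUKS : ∀ z ∈ U, ∀ s ∈ K, z + s ∈ S)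
    (hmaps : ∀ z ∈ U, ∀ s ∈ K, stieltjes μ (z + s) ∈ K) :
    ∃ g : ℂ → ℂ, DifferentiableOn ℂ g U ∧ ∀ z ∈ U, IsSelfConsistent μ z (g z) := by
  obtain ⟨s₀, hs₀⟩ := hK₀
  have hLip := lipschitzOnWith_stieltjes hS
  obtain ⟨g, hg, hgK⟩ := exists_differentiableOn_fixedPoint (F := fun z s ↦ stieltjes μ (z + s))
    hU hK.isClosed hk (fun z hz s hs ↦ hmaps z hz s hs)
    (fun z hz ↦ LipschitzOnWith.of_dist_le_mul fun s hs t ht ↦ by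
      simpa only [dist_add_left] using hLip.dist_le_mul _ (hUKS z hz s hs) _ (hUKS z hz t ht))
    hs₀ (fun z hz ↦ dist_le_diam_of_mem hK.isBounded hs₀ (hmaps z hz s₀ hs₀))
    (fun g hg hgK z hz ↦ (differentiableAt_stieltjes (μ := μ) (hS _ (hUKS z hz _ (hgK hz))).1
      |>.comp_differentiableWithinAt (f := fun z ↦ z + g z) z
        (differentiableWithinAt_id.add (hg z hz))))
  refine ⟨g, hg, fun z hz ↦ ⟨?_, (hgK z hz).2.symm⟩⟩
  have hw := hS _ (hUKS z hz _ (hgK z hz).1)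
  rw [← (hgK z hz).2, im_stieltjes hw.1]
  exact mul_pos hw.1 (invDistSqIntegral_pos hw.1)

theorem exists_isSelfConsistent [IsProbabilityMeasure μ] :
    ∃ z s, 0 < z.im ∧ IsSelfConsistent μ z s := by
  have hUK : ∀ z : ℂ, 3 < z.im → ∀ s ∈ closedBall (0 : ℂ) 1, 2 < (z + s).im := fun z hz s hs ↦ by
    have := neg_le_of_abs_le ((abs_im_le_norm s).trans (mem_closedBall_zero_iff.1 hs))
    rw [add_im]
    linarith
  have hS : ∀ w : ℂ, 2 < w.im → 0 < w.im ∧ invDistSqIntegral μ w ≤ (1 / 4 : ℝ≥0) := fun w hw ↦ by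
    refine ⟨by linarith, (invDistSqIntegral_le (by linarith)).trans ?_⟩
    rw [NNReal.coe_div, NNReal.coe_one, NNReal.coe_ofNat, inv_pow]
    calc (w.im ^ 2)⁻¹ ≤ (2 ^ 2)⁻¹ := by gcongr
      _ = 1 / 4 := by norm_num
  have hmaps : ∀ z : ℂ, 3 < z.im → ∀ s ∈ closedBall (0 : ℂ) 1,
      stieltjes μ (z + s) ∈ closedBall 0 1 := fun z hz s hs ↦ by
    have hw := hUK z hz s hs
    rw [mem_closedBall_zero_iff]
    refine (norm_stieltjes_le (by linarith)).trans ?_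
    rw [inv_le_one₀ (by linarith)]
    linarith
  obtain ⟨g, -, hg⟩ := exists_differentiableOn_isSelfConsistent
    (isOpen_lt continuous_const continuous_im) (isCompact_closedBall (0 : ℂ) 1)
    (nonempty_closedBall.2 zero_le_one) (by norm_num) hS hUK hmaps
  exact ⟨4 * I, g (4 * I), by simp, hg _ (by simp; norm_num)⟩

theorem IsSelfConsistent.exists_eventually_differentiableAt [IsFiniteMeasure μ] [NeZero μ]
    {z₀ s₀ : ℂ} (hz₀ : 0 < z₀.im) (hs₀ : IsSelfConsistent μ z₀ s₀) :
    ∃ g : ℂ → ℂ, ∀ᶠ z in 𝓝 z₀, DifferentiableAt ℂ g z ∧ IsSelfConsistent μ z (g z) := by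
  set w₀ := z₀ + s₀
  have hw₀ : 0 < w₀.im := hs₀.im_add_pos hz₀
  obtain ⟨k, hJk, hk⟩ := exists_between (hs₀.invDistSqIntegral_lt_one hz₀)
  lift k to ℝ≥0 using invDistSqIntegral_nonneg.trans hJk.le
  obtain ⟨δ, hδ, hδJ⟩ := Metric.eventually_nhds_iff.1
    ((continuousAt_invDistSqIntegral hw₀).eventually (gt_mem_nhds hJk))
  obtain ⟨r, hr, hrδ, hrw⟩ : ∃ r > 0, 2 * r ≤ δ ∧ 2 * r ≤ w₀.im :=
    ⟨min δ w₀.im / 2, by positivity, by linarith [min_le_left δ w₀.im],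
      by linarith [min_le_right δ w₀.im]⟩
  -- with `ε = (1 - k) r`, `stieltjes μ (z + ·)` maps `closedBall s₀ r` into itself on `ball z₀ ε`
  obtain ⟨ε, hε, hεr, hkε⟩ : ∃ ε > 0, ε ≤ r ∧ k * (ε + r) ≤ r :=
    ⟨r * (1 - k), mul_pos hr (sub_pos.2 hk), by nlinarith [k.2],
      by nlinarith [mul_nonneg hr.le (sq_nonneg (1 - (k : ℝ)))]⟩
  have hS : ∀ w ∈ ball w₀ (2 * r), 0 < w.im ∧ invDistSqIntegral μ w ≤ k := fun w hw ↦
    ⟨by linarith [im_sub_lt_im_of_dist_lt hw], (hδJ (hw.trans_le hrδ)).le⟩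
  have hUKS : ∀ z ∈ ball z₀ ε, ∀ s ∈ closedBall s₀ r, z + s ∈ ball w₀ (2 * r) :=
    fun z hz s hs ↦ (dist_add_add_le z s z₀ s₀).trans_lt (by
      linarith [mem_ball.1 hz, mem_closedBall.1 hs])
  have hmaps : ∀ z ∈ ball z₀ ε, ∀ s ∈ closedBall s₀ r, stieltjes μ (z + s) ∈ closedBall s₀ r := by
    intro z hz s hs
    have hw₀S : w₀ ∈ ball w₀ (2 * r) := mem_ball_self (by linarith)
    rw [mem_closedBall, hs₀.2]
    calc dist (stieltjes μ (z + s)) (stieltjes μ w₀) ≤ k * dist (z + s) w₀ :=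
          (lipschitzOnWith_stieltjes hS).dist_le_mul _ (hUKS z hz s hs) _ hw₀S
      _ ≤ k * (ε + r) := by
          gcongr
          exact (dist_add_add_le z s z₀ s₀).trans
            (add_le_add (mem_ball.1 hz).le (mem_closedBall.1 hs))
      _ ≤ r := hkε
  obtain ⟨g, hg, hgs⟩ := exists_differentiableOn_isSelfConsistent isOpen_ball
    (isCompact_closedBall s₀ r) (nonempty_closedBall.2 hr.le) hk hS hUKS hmaps
  exact ⟨g, Filter.mem_of_superset (ball_mem_nhds z₀ hε) fun z hz ↦
    ⟨hg.differentiableAt (isOpen_ball.mem_nhds hz), hgs z hz⟩⟩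

theorem differentiableAt_of_eventually_isSelfConsistent [IsFiniteMeasure μ] [NeZero μ]
    {f : ℂ → ℂ} {z : ℂ} (hz : 0 < z.im) (hf : ∀ᶠ z' in 𝓝 z, IsSelfConsistent μ z' (f z')) :
    DifferentiableAt ℂ f z := by
  obtain ⟨g, hg⟩ := hf.self_of_nhds.exists_eventually_differentiableAt hz
  have hfg : f =ᶠ[𝓝 z] g := by
    filter_upwards [hf, hg, UpperHalfPlane.isOpen_upperHalfPlaneSet.mem_nhds hz]
      with z' hf' hg' hz' using hf'.eq hz' hg'.2
  exact hg.self_of_nhds.1.congr_of_eventuallyEq hfg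

theorem exists_isSelfConsistent_of_mem_closure [IsProbabilityMeasure μ] {z : ℂ} (hz : 0 < z.im)
    (hcl : z ∈ closure {z' | ∃ s, IsSelfConsistent μ z' s}) : ∃ s, IsSelfConsistent μ z s := by
  obtain ⟨zn, hzn, hlim⟩ := mem_closure_iff_seq_limit.1 hcl
  choose sn hsn using hzn
  obtain ⟨η, hη, hηz⟩ : ∃ η > 0, η + η = z.im := ⟨z.im / 2, half_pos hz, add_halves _⟩
  set B := ‖z‖ + η + η⁻¹
  set c := ∫ x, ((|x| + B) ^ 2)⁻¹ ∂μ
  have hc : 0 < c := integral_inv_add_sq_pos (by positivity)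
  set K := {s : ℂ | η * c ≤ s.im} ∩ closedBall 0 η⁻¹
  have hK : IsCompact K :=
    (isCompact_closedBall 0 _).inter_left (isClosed_le continuous_const continuous_im)
  have hev : ∀ᶠ n in atTop, sn n ∈ K := by
    filter_upwards [hlim.eventually (ball_mem_nhds z hη)] with n hn
    have hzn : η < (zn n).im := by linarith [im_sub_lt_im_of_dist_lt (mem_ball.1 hn)]
    have hsn_le : ‖sn n‖ ≤ η⁻¹ := ((hsn n).norm_le (hη.trans hzn)).trans (inv_anti₀ hη hzn.le)
    have hB : ‖zn n + sn n‖ ≤ B := (norm_add_le _ _).trans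
      (add_le_add (norm_le_norm_add_const_of_dist_le (mem_ball.1 hn).le) hsn_le)
    refine ⟨?_, mem_closedBall_zero_iff.2 hsn_le⟩
    exact (mul_le_mul_of_nonneg_right hzn.le hc.le).trans
      ((hsn n).mul_integral_le_im (hη.trans hzn) hB)
  obtain ⟨s, hsK, φ, hφ, hsφ⟩ := hK.tendsto_subseq' hev.frequently
  have hs : 0 < s.im := (mul_pos hη hc).trans_le hsK.1
  refine ⟨s, hs, tendsto_nhds_unique hsφ ?_⟩
  have hw : 0 < (z + s).im := by rw [add_im]; exact add_pos hz hs
  refine ((differentiableAt_stieltjes hw).continuousAt.tendsto.comp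
    ((hlim.comp hφ.tendsto_atTop).add hsφ)).congr fun n ↦ ?_
  exact ((hsn (φ n)).2).symm

end Existence

theorem exists_unique_self_consistent_general
    (μ : Measure ℝ) [IsProbabilityMeasure μ] :
    ∃ s₀ : ℂ → ℂ,
      (DifferentiableOn ℂ s₀ {z : ℂ | 0 < z.im}) ∧
      (∀ z : ℂ, 0 < z.im → 0 < (s₀ z).im ∧ s₀ z = stieltjes μ (z + s₀ z)) ∧
      (∀ s₁ : ℂ → ℂ,
        DifferentiableOn ℂ s₁ {z : ℂ | 0 < z.im} →
        (∀ z : ℂ, 0 < z.im → 0 < (s₁ z).im ∧ s₁ z = stieltjes μ (z + s₁ z)) →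
        ∀ z : ℂ, 0 < z.im → s₁ z = s₀ z) := by
  set A := {z : ℂ | 0 < z.im ∧ ∃ s, IsSelfConsistent μ z s}
  have hA : IsOpen A := isOpen_iff_mem_nhds.2 fun z ⟨hz, s, hs⟩ ↦ by
    obtain ⟨g, hg⟩ := hs.exists_eventually_differentiableAt hz
    filter_upwards [hg, UpperHalfPlane.isOpen_upperHalfPlaneSet.mem_nhds hz]
      with z' hg' hz' using ⟨hz', _, hg'.2⟩
  have hA₀ : ({z : ℂ | 0 < z.im} ∩ A).Nonempty :=
    let ⟨z, s, hz, hs⟩ := exists_isSelfConsistent (μ := μ)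
    ⟨z, hz, hz, s, hs⟩
  have hUA : {z : ℂ | 0 < z.im} ⊆ A :=
    (convex_halfSpace_im_gt 0).isPreconnected.subset_of_closure_inter_subset hA hA₀
      fun z ⟨hzA, hz⟩ ↦ ⟨hz, exists_isSelfConsistent_of_mem_closure hz
        (closure_mono (fun _ h ↦ h.2) hzA)⟩
  choose! s₀ hs₀ using fun (z : ℂ) (hz : 0 < z.im) ↦ (hUA hz).2
  refine ⟨s₀, fun z hz ↦ ?_, hs₀,
    fun s₁ _ hs₁ z hz ↦ IsSelfConsistent.eq hz (hs₁ z hz) (hs₀ z hz)⟩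
  exact (differentiableAt_of_eventually_isSelfConsistent hz <|
    Filter.mem_of_superset (UpperHalfPlane.isOpen_upperHalfPlaneSet.mem_nhds hz) hs₀)
    |>.differentiableWithinAt

theorem exists_unique_self_consistent
    (μ : Measure ℝ) [IsProbabilityMeasure μ]
    (a b : ℝ) (hsupp : μ (Set.Icc a b)ᶜ = 0) :
    ∃ s₀ : ℂ → ℂ,
      (DifferentiableOn ℂ s₀ {z : ℂ | 0 < z.im}) ∧
      (∀ z : ℂ, 0 < z.im → 0 < (s₀ z).im ∧ s₀ z = stieltjes μ (z + s₀ z)) ∧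
      (∀ s₁ : ℂ → ℂ,
        DifferentiableOn ℂ s₁ {z : ℂ | 0 < z.im} →
        (∀ z : ℂ, 0 < z.im → 0 < (s₁ z).im ∧ s₁ z = stieltjes μ (z + s₁ z)) →
        ∀ z : ℂ, 0 < z.im → s₁ z = s₀ z) :=
  exists_unique_self_consistent_general μ
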